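/- arXiv:1701.05277 — 6 statements merged into one kernel-verified Lean document; each statement's English description precedes it below -/
import Mathlib

section
/- Let w1, w2 be complementary words of length n. Then the complex vector space of linear maps T from functions R(w2) → ℂ to functions R(w1) → ℂ satisfying T(σ·f) = sign(σ)·(σ·(T f)) for all σ ∈ S_n and all f is exactly one-dimensional; moreover, for any nonzero such T, the image of T is a nonzero S_n-invariant subspace whose only S_n-invariant subspaces are 0 and itself (i.e., the image is an irreducible S_n-subrepresentation). -/
/-- The action of a permutation on a word: `σ · w = w ∘ σ⁻¹`. -/
def wact {n : ℕ} (σ : Equiv.Perm (Fin n)) (w : Fin n → ℕ) : Fin n → ℕ :=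
  w ∘ σ.symm

/-- `r` is a rearrangement of `w`. -/
def IsRearr {n : ℕ} (w r : Fin n → ℕ) : Prop :=
  ∃ σ : Equiv.Perm (Fin n), wact σ w = r

/-- The type of rearrangements of a word `w`. -/
abbrev Rearr {n : ℕ} (w : Fin n → ℕ) : Type :=
  {r : Fin n → ℕ // IsRearr w r}

theorem wact_wact {n : ℕ} (σ τ : Equiv.Perm (Fin n)) (w : Fin n → ℕ) :
    wact σ (wact τ w) = wact (σ * τ) w := rfl

/-- The action of a permutation on the type of rearrangements of `w`. -/
def ract {n : ℕ} {w : Fin n → ℕ} (σ : Equiv.Perm (Fin n)) (r : Rearr w) : Rearr w :=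
  ⟨wact σ r.1, by
    obtain ⟨τ, hτ⟩ := r.2
    exact ⟨σ * τ, by rw [← hτ, wact_wact]⟩⟩

instance {n : ℕ} (w : Fin n → ℕ) : Finite (Rearr w) :=
  Finite.of_surjective (fun σ : Equiv.Perm (Fin n) => (⟨wact σ w, σ, rfl⟩ : Rearr w))
    (fun r => by obtain ⟨r, σ, hσ⟩ := r; exact ⟨σ, Subtype.ext hσ⟩)

noncomputable instance {n : ℕ} (w : Fin n → ℕ) : Fintype (Rearr w) :=
  Fintype.ofFinite _

/-- Young's character `Y(r1, r2) = Σ sign σ` over all `σ` with `σ·w1 = r1` and `σ·w2 = r2`. -/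
def youngChar {n : ℕ} (w1 w2 : Fin n → ℕ) (r1 r2 : Fin n → ℕ) : ℤ :=
  ∑ σ : Equiv.Perm (Fin n),
    if wact σ w1 = r1 ∧ wact σ w2 = r2 then (Equiv.Perm.sign σ : ℤ) else 0

/-- A pair of words has trivial (diagonal) stabilizer. -/
def FreePair {n : ℕ} (p : (Fin n → ℕ) × (Fin n → ℕ)) : Prop :=
  ∀ σ : Equiv.Perm (Fin n), wact σ p.1 = p.1 → wact σ p.2 = p.2 → σ = 1

/-- The diagonal action on `R(w1) × R(w2)` has exactly one free orbit. -/
def HaveComplRearr {n : ℕ} (w1 w2 : Fin n → ℕ) : Prop :=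
  (∃ p : (Fin n → ℕ) × (Fin n → ℕ), IsRearr w1 p.1 ∧ IsRearr w2 p.2 ∧ FreePair p) ∧
  ∀ p q : (Fin n → ℕ) × (Fin n → ℕ),
    IsRearr w1 p.1 → IsRearr w2 p.2 → FreePair p →
    IsRearr w1 q.1 → IsRearr w2 q.2 → FreePair q →
    ∃ σ : Equiv.Perm (Fin n), wact σ p.1 = q.1 ∧ wact σ p.2 = q.2

/-- `w1, w2` are complementary: there is a unique free orbit and `(w1, w2)` lies in it. -/
def Complementary {n : ℕ} (w1 w2 : Fin n → ℕ) : Prop :=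
  HaveComplRearr w1 w2 ∧ FreePair (w1, w2)

/-- A column of the Specht matrix, as a complex vector indexed by `R(w1)`. -/
noncomputable def spechtCol {n : ℕ} (w1 w2 : Fin n → ℕ) (r2 : Rearr w2) : Rearr w1 → ℂ :=
  fun r1 => (youngChar w1 w2 r1.1 r2.1 : ℂ)

/-- The Specht module: the span of the columns of the Specht matrix. -/
noncomputable def SpechtModule {n : ℕ} (w1 w2 : Fin n → ℕ) : Submodule ℂ (Rearr w1 → ℂ) :=
  Submodule.span ℂ (Set.range (spechtCol w1 w2))

/-- A column of the real Specht matrix. -/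
noncomputable def spechtColR {n : ℕ} (w1 w2 : Fin n → ℕ) (r2 : Rearr w2) : Rearr w1 → ℝ :=
  fun r1 => (youngChar w1 w2 r1.1 r2.1 : ℝ)

/-- The Specht polytope: the convex hull of the columns of the real Specht matrix. -/
noncomputable def SpechtPolytope {n : ℕ} (w1 w2 : Fin n → ℕ) : Set (Rearr w1 → ℝ) :=
  convexHull ℝ (Set.range (spechtColR w1 w2))

/-- The `S_n`-action on complex-valued functions on `R(w)`: `(σ·f)(r) = f(σ⁻¹·r)`. -/
def factC {n : ℕ} {w : Fin n → ℕ} (σ : Equiv.Perm (Fin n)) (f : Rearr w → ℂ) :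
    Rearr w → ℂ :=
  fun r => f (ract σ⁻¹ r)

/-- A weakly decreasing list of positive integers (a partition shape). -/
def SortedPartList (l : List ℕ) : Prop :=
  l.Pairwise (· ≥ ·) ∧ ∀ x ∈ l, 0 < x

/-- The multiset of letter multiplicities of a word. -/
def multMultiset {n : ℕ} (w : Fin n → ℕ) : Multiset ℕ :=
  (Finset.image w Finset.univ).val.map
    (fun v => (Finset.univ.filter (fun i => w i = v)).card)

/-- The decreasingly sorted letter multiplicities of `w` are given by the list `l`. -/
def HasMultiplicities {n : ℕ} (w : Fin n → ℕ) (l : List ℕ) : Prop :=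
  SortedPartList l ∧ (l : Multiset ℕ) = multMultiset w

/-- The conjugate partition, as a list: `λ*_i = #{k : λ_k ≥ i}`. -/
def conjList (l : List ℕ) : List ℕ :=
  (List.range (l.getD 0 0)).map (fun j => (l.filter (fun x => j + 1 ≤ x)).length)

/-- The complementary pair `(w1, w2)` corresponds to the partition `l`. -/
def CorrespondsTo {n : ℕ} (w1 w2 : Fin n → ℕ) (l : List ℕ) : Prop :=
  HasMultiplicities w1 l ∧ HasMultiplicities w2 (conjList l)

/-- `T` intertwines the `S_n`-actions up to sign: `T(σ·f) = sign(σ) · (σ·(T f))`. -/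
def IsSignEquivariant {n : ℕ} (w1 w2 : Fin n → ℕ)
    (T : (Rearr w2 → ℂ) →ₗ[ℂ] (Rearr w1 → ℂ)) : Prop :=
  ∀ (σ : Equiv.Perm (Fin n)) (f : Rearr w2 → ℂ),
    T (factC σ f) = ((Equiv.Perm.sign σ : ℤ) : ℂ) • factC σ (T f)

/-!
A sign-equivariant map `T` is determined by its matrix `M` in the basis of indicator functions,
and `M (σ • r₁) (σ • r₂) = sign σ * M r₁ r₂`. If the pair `(r₁, r₂)` has a non-trivial stabiliser,
then it is fixed by a transposition, so `M r₁ r₂ = - M r₁ r₂ = 0`. On the unique free orbit,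
that of `(w₁, w₂)`, the matrix is determined by `M w₁ w₂`. Young's character matrix is such a
matrix with entry `1` at `(w₁, w₂)`, so these maps form a line.

Irreducibility of the image is Schur's argument: if `U` is an invariant subspace of `range T`,
composing `T` with an equivariant projection onto `U` (Maschke) gives a sign-equivariant map,
hence a multiple `c • T`; if `U ≠ 0` then `c = 1`, and so `range T ≤ U`.
-/

namespace Representation

variable {k G V : Type*} [Field k] [Group G] [Finite G] [NeZero (Nat.card G : k)]
  [AddCommGroup V] [Module k V] (ρ : Representation k G V)

theorem exists_projection_commute {U : Submodule k V} (hU : ∀ g, ∀ v ∈ U, ρ g v ∈ U) :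
    ∃ P : V →ₗ[k] V, (∀ g, Commute P (ρ g)) ∧ (∀ v, P v ∈ U) ∧ ∀ u ∈ U, P u = u := by
  obtain ⟨U', hU'⟩ := exists_isCompl (⟨U, hU⟩ : Subrepresentation ρ)
  have hc : IsCompl U U'.toSubmodule :=
    ⟨disjoint_iff.2 (congrArg Subrepresentation.toSubmodule (disjoint_iff.1 hU'.1)),
      codisjoint_iff.2 (congrArg Subrepresentation.toSubmodule (codisjoint_iff.1 hU'.2))⟩
  refine ⟨U.projection U'.toSubmodule hc, fun g => ?_, Submodule.projection_apply_mem hc,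
    fun u hu => Submodule.projection_apply_of_mem_left hc hu⟩
  rw [LinearMap.IsIdempotentElem.commute_iff (Submodule.isIdempotentElem_projection hc),
    Submodule.range_projection, Submodule.ker_projection]
  exact ⟨hU g, fun v hv => U'.apply_mem_toSubmodule g hv⟩

theorem eq_bot_or_eq_range_of_comp_eq_smul {W : Type*} [AddCommGroup W] [Module k W]
    {T : W →ₗ[k] V} (hT : ∀ P : V →ₗ[k] V, (∀ g, Commute P (ρ g)) → ∃ c : k, P ∘ₗ T = c • T)
    {U : Submodule k V} (hUT : U ≤ LinearMap.range T) (hU : ∀ g, ∀ v ∈ U, ρ g v ∈ U) :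
    U = ⊥ ∨ U = LinearMap.range T := by
  obtain ⟨P, hPcomm, hPmem, hPid⟩ := ρ.exists_projection_commute hU
  obtain ⟨c, hc⟩ := hT P hPcomm
  have hPT : ∀ x, P (T x) = c • T x := fun x => LinearMap.congr_fun hc x
  refine or_iff_not_imp_left.2 fun hne => le_antisymm hUT ?_
  obtain ⟨u, hu, hu0⟩ := Submodule.exists_mem_ne_zero_of_ne_bot hne
  obtain ⟨x, rfl⟩ := hUT hu
  have hc1 : c = 1 := by
    have : (c - 1) • T x = 0 := by rw [sub_smul, one_smul, ← hPT, hPid _ hu, sub_self]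
    exact sub_eq_zero.1 ((smul_eq_zero.1 this).resolve_right hu0)
  rintro _ ⟨y, rfl⟩
  simpa [hPT, hc1] using hPmem (T y)

end Representation

open Equiv

section Words

variable {n : ℕ}

@[simp] theorem wact_one (a : Fin n → ℕ) : wact 1 a = a := rfl

theorem wact_injective (σ : Perm (Fin n)) : Function.Injective (wact σ) := fun a b hab => by
  simpa [wact_wact] using congrArg (wact σ⁻¹) hab

theorem wact_swap_of_eq {a : Fin n → ℕ} {i j : Fin n} (h : a i = a j) :
    wact (swap i j) a = a := by
  funext x
  simp only [wact, Function.comp_apply, symm_swap]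
  rcases eq_or_ne x i with rfl | hxi
  · rw [swap_apply_left, h]
  rcases eq_or_ne x j with rfl | hxj
  · rw [swap_apply_right, h]
  · rw [swap_apply_of_ne_of_ne hxi hxj]

theorem apply_eq_of_wact_eq_self {σ : Perm (Fin n)} {a : Fin n → ℕ} (h : wact σ a = a)
    (i : Fin n) : a (σ i) = a i := by
  simpa [wact] using (congrFun h (σ i)).symm

theorem exists_swap_of_not_freePair {p : (Fin n → ℕ) × (Fin n → ℕ)} (hp : ¬ FreePair p) :
    ∃ i j : Fin n, i ≠ j ∧ wact (swap i j) p.1 = p.1 ∧ wact (swap i j) p.2 = p.2 := by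
  simp only [FreePair, not_forall] at hp
  obtain ⟨σ, h1, h2, hσ⟩ := hp
  obtain ⟨i, hi⟩ := not_forall.1 fun h => hσ (Equiv.ext h)
  exact ⟨σ i, i, hi, wact_swap_of_eq (apply_eq_of_wact_eq_self h1 i),
    wact_swap_of_eq (apply_eq_of_wact_eq_self h2 i)⟩

theorem Complementary.exists_wact_of_freePair {w1 w2 : Fin n → ℕ} (h : Complementary w1 w2)
    {r1 r2 : Fin n → ℕ} (hr1 : IsRearr w1 r1) (hr2 : IsRearr w2 r2) (hr : FreePair (r1, r2)) :
    ∃ σ : Perm (Fin n), wact σ w1 = r1 ∧ wact σ w2 = r2 :=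
  h.1.2 (w1, w2) (r1, r2) ⟨1, rfl⟩ ⟨1, rfl⟩ h.2 hr1 hr2 hr

theorem youngChar_wact (w1 w2 : Fin n → ℕ) (σ : Perm (Fin n)) (r1 r2 : Fin n → ℕ) :
    youngChar w1 w2 (wact σ r1) (wact σ r2) = Perm.sign σ * youngChar w1 w2 r1 r2 := by
  rw [youngChar, youngChar, Finset.mul_sum, ← Equiv.sum_comp (Equiv.mulLeft σ)]
  refine Fintype.sum_congr _ _ fun τ => ?_
  simp only [coe_mulLeft, ← wact_wact, (wact_injective σ).eq_iff, Perm.sign_mul, mul_ite,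
    mul_zero]
  push_cast
  rfl

theorem youngChar_self_of_freePair {w1 w2 : Fin n → ℕ} (h : FreePair (w1, w2)) :
    youngChar w1 w2 w1 w2 = 1 := by
  rw [youngChar, Fintype.sum_eq_single 1 fun σ hσ => if_neg fun hfix => hσ (h σ hfix.1 hfix.2)]
  simp

instance (w : Fin n → ℕ) : MulAction (Perm (Fin n)) (Rearr w) where
  smul := ract
  one_smul _ := rfl
  mul_smul _ _ _ := rfl

namespace Rearr

@[simp] theorem coe_smul {w : Fin n → ℕ} (σ : Perm (Fin n)) (r : Rearr w) :
    ((σ • r : Rearr w) : Fin n → ℕ) = wact σ r :=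
  rfl

@[simp] theorem ract_eq_smul {w : Fin n → ℕ} (σ : Perm (Fin n)) (r : Rearr w) :
    ract σ r = σ • r :=
  rfl

def base (w : Fin n → ℕ) : Rearr w := ⟨w, 1, rfl⟩

end Rearr

open Rearr

def permRep (w : Fin n → ℕ) : Representation ℂ (Perm (Fin n)) (Rearr w → ℂ) where
  toFun σ := LinearMap.funLeft ℂ ℂ (σ⁻¹ • ·)
  map_one' := rfl
  map_mul' σ τ := by ext; simp [mul_smul]

theorem permRep_apply (w : Fin n → ℕ) (σ : Perm (Fin n)) (f : Rearr w → ℂ) :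
    permRep w σ f = factC σ f :=
  rfl

theorem factC_single {w : Fin n → ℕ} (σ : Perm (Fin n)) (r : Rearr w) :
    factC σ (Pi.single r 1) = Pi.single (σ • r) 1 := by
  funext s
  simp only [factC, ract_eq_smul, Pi.single_apply]
  exact if_congr inv_smul_eq_iff rfl rfl

variable {w1 w2 : Fin n → ℕ}

def IsSignEquivariantMatrix (M : Matrix (Rearr w1) (Rearr w2) ℂ) : Prop :=
  ∀ (σ : Perm (Fin n)) r1 r2, M (σ • r1) (σ • r2) = ((Perm.sign σ : ℤ) : ℂ) * M r1 r2

theorem isSignEquivariant_iff_toMatrix' (T : (Rearr w2 → ℂ) →ₗ[ℂ] (Rearr w1 → ℂ)) :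
    IsSignEquivariant w1 w2 T ↔ IsSignEquivariantMatrix (LinearMap.toMatrix' T) := by
  constructor
  · intro hT σ r1 r2
    simpa [LinearMap.toMatrix'_apply, ← factC_single, factC] using
      congrFun (hT σ (Pi.single r2 1)) (σ • r1)
  · intro hM σ
    suffices T ∘ₗ permRep w2 σ = ((Perm.sign σ : ℤ) : ℂ) • (permRep w1 σ ∘ₗ T) from
      fun f => LinearMap.congr_fun this f
    ext r2 r1
    simpa [LinearMap.toMatrix'_apply, permRep_apply, factC_single, factC] using
      hM σ (σ⁻¹ • r1) r2

theorem IsSignEquivariantMatrix.apply_eq_zero {M : Matrix (Rearr w1) (Rearr w2) ℂ}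
    (hM : IsSignEquivariantMatrix M) {r1 : Rearr w1} {r2 : Rearr w2}
    (hr : ¬ FreePair (r1.1, r2.1)) : M r1 r2 = 0 := by
  obtain ⟨i, j, hij, h1, h2⟩ := exists_swap_of_not_freePair hr
  have := hM (swap i j) r1 r2
  rwa [show swap i j • r1 = r1 from Subtype.ext h1, show swap i j • r2 = r2 from Subtype.ext h2,
    Perm.sign_swap hij, Units.val_neg, Units.val_one, Int.cast_neg, Int.cast_one, neg_one_mul,
    self_eq_neg] at this

theorem IsSignEquivariantMatrix.eq_smul_of_complementary (h : Complementary w1 w2)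
    {M N : Matrix (Rearr w1) (Rearr w2) ℂ} (hM : IsSignEquivariantMatrix M)
    (hN : IsSignEquivariantMatrix N) (hN1 : N (base w1) (base w2) = 1) :
    M = M (base w1) (base w2) • N := by
  ext r1 r2
  by_cases hr : FreePair (r1.1, r2.1)
  · obtain ⟨σ, h1, h2⟩ := h.exists_wact_of_freePair r1.2 r2.2 hr
    obtain rfl : r1 = σ • base w1 := Subtype.ext h1.symm
    obtain rfl : r2 = σ • base w2 := Subtype.ext h2.symm
    rw [Matrix.smul_apply, hM, hN, hN1, smul_eq_mul, mul_one, mul_comm]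
  · rw [Matrix.smul_apply, hM.apply_eq_zero hr, hN.apply_eq_zero hr, smul_zero]

noncomputable def spechtMatrix (w1 w2 : Fin n → ℕ) : Matrix (Rearr w1) (Rearr w2) ℂ :=
  Matrix.of fun r1 r2 => spechtCol w1 w2 r2 r1

theorem isSignEquivariantMatrix_spechtMatrix : IsSignEquivariantMatrix (spechtMatrix w1 w2) :=
  fun σ r1 r2 => by simp [spechtMatrix, spechtCol, youngChar_wact]

theorem spechtMatrix_base (h : FreePair (w1, w2)) :
    spechtMatrix w1 w2 (base w1) (base w2) = 1 := by
  simp [spechtMatrix, spechtCol, base, youngChar_self_of_freePair h]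

theorem isSignEquivariant_toLin'_spechtMatrix :
    IsSignEquivariant w1 w2 (Matrix.toLin' (spechtMatrix w1 w2)) := by
  rw [isSignEquivariant_iff_toMatrix', LinearMap.toMatrix'_toLin']
  exact isSignEquivariantMatrix_spechtMatrix

theorem toLin'_spechtMatrix_ne_zero (h : FreePair (w1, w2)) :
    Matrix.toLin' (spechtMatrix w1 w2) ≠ 0 := by
  rw [Ne, LinearEquiv.map_eq_zero_iff]
  intro h0
  simpa [h0] using spechtMatrix_base h

namespace IsSignEquivariant

variable {T : (Rearr w2 → ℂ) →ₗ[ℂ] (Rearr w1 → ℂ)}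

theorem exists_eq_smul_spechtMatrix (h : Complementary w1 w2) (hT : IsSignEquivariant w1 w2 T) :
    ∃ a : ℂ, T = a • Matrix.toLin' (spechtMatrix w1 w2) := by
  refine ⟨LinearMap.toMatrix' T (base w1) (base w2), ?_⟩
  rw [← map_smul, ← ((isSignEquivariant_iff_toMatrix' T).1 hT).eq_smul_of_complementary h
    isSignEquivariantMatrix_spechtMatrix (spechtMatrix_base h.2), Matrix.toLin'_toMatrix']

theorem exists_eq_smul (h : Complementary w1 w2) (hT : IsSignEquivariant w1 w2 T) (hT0 : T ≠ 0)
    {T' : (Rearr w2 → ℂ) →ₗ[ℂ] (Rearr w1 → ℂ)} (hT' : IsSignEquivariant w1 w2 T') :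
    ∃ c : ℂ, T' = c • T := by
  obtain ⟨a, rfl⟩ := hT.exists_eq_smul_spechtMatrix h
  obtain ⟨b, rfl⟩ := hT'.exists_eq_smul_spechtMatrix h
  exact ⟨b / a, by rw [smul_smul, div_mul_cancel₀ _ (left_ne_zero_of_smul hT0)]⟩

theorem comp (hT : IsSignEquivariant w1 w2 T) {P : (Rearr w1 → ℂ) →ₗ[ℂ] (Rearr w1 → ℂ)}
    (hP : ∀ σ, Commute P (permRep w1 σ)) : IsSignEquivariant w1 w2 (P ∘ₗ T) := fun σ f => by
  rw [LinearMap.comp_apply, hT, map_smul, ← permRep_apply, ← Module.End.mul_apply, (hP σ).eq]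
  rfl

theorem factC_mem_range (hT : IsSignEquivariant w1 w2 T) (σ : Perm (Fin n))
    {f : Rearr w1 → ℂ} (hf : f ∈ LinearMap.range T) : factC σ f ∈ LinearMap.range T := by
  obtain ⟨g, rfl⟩ := hf
  refine ⟨((Perm.sign σ : ℤ) : ℂ) • factC σ g, ?_⟩
  rw [map_smul, hT, smul_smul, ← Int.cast_mul, ← Units.val_mul, Int.units_mul_self,
    Units.val_one, Int.cast_one, one_smul]

end IsSignEquivariant

end Words

/-- For complementary words `w1, w2`, the space of linear maps
`T : ℂ^{R(w2)} → ℂ^{R(w1)}` with `T(σ·f) = sign(σ)·(σ·(T f))` is exactly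
one-dimensional, and the image of any nonzero such `T` is a nonzero `S_n`-invariant
subspace whose only invariant subspaces are `0` and itself. -/
theorem specht_stmt_2 {n : ℕ} (w1 w2 : Fin n → ℕ) (h : Complementary w1 w2) :
    (∃ T : (Rearr w2 → ℂ) →ₗ[ℂ] (Rearr w1 → ℂ), T ≠ 0 ∧ IsSignEquivariant w1 w2 T) ∧
    (∀ T T' : (Rearr w2 → ℂ) →ₗ[ℂ] (Rearr w1 → ℂ),
      IsSignEquivariant w1 w2 T → T ≠ 0 → IsSignEquivariant w1 w2 T' →
      ∃ c : ℂ, T' = c • T) ∧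
    (∀ T : (Rearr w2 → ℂ) →ₗ[ℂ] (Rearr w1 → ℂ),
      IsSignEquivariant w1 w2 T → T ≠ 0 →
      LinearMap.range T ≠ ⊥ ∧
      (∀ σ : Equiv.Perm (Fin n), ∀ f ∈ LinearMap.range T, factC σ f ∈ LinearMap.range T) ∧
      ∀ U : Submodule ℂ (Rearr w1 → ℂ), U ≤ LinearMap.range T →
        (∀ σ : Equiv.Perm (Fin n), ∀ f ∈ U, factC σ f ∈ U) →
        U = ⊥ ∨ U = LinearMap.range T) := by
  refine ⟨⟨_, toLin'_spechtMatrix_ne_zero h.2, isSignEquivariant_toLin'_spechtMatrix⟩,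
    fun T T' hT hT0 hT' => hT.exists_eq_smul h hT0 hT', fun T hT hT0 => ?_⟩
  refine ⟨mt LinearMap.range_eq_bot.1 hT0, hT.factC_mem_range, fun U hUT hU => ?_⟩
  exact (permRep w1).eq_bot_or_eq_range_of_comp_eq_smul
    (fun P hP => hT.exists_eq_smul h hT0 (hT.comp hP)) hUT hU
end

section
/- Let w1, w2 be complementary words of length n. The Specht module V(w1, w2) ⊆ ℂ^{R(w1)} (the span of the columns of the Specht matrix) is a nonzero subspace, it is invariant under the S_n-action (σ·f)(r1) = f(σ⁻¹·r1), and it is irreducible: every S_n-invariant subspace of V(w1, w2) equals 0 or V(w1, w2). -/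
/-!
Let `e` be the column of the Specht matrix indexed by `w2` and `κ = Σ_{σ ∈ Stab w2} sign σ · σ`.
Since `σ · v_{r2} = sign σ · v_{σ r2}`, the module `V` is spanned by the translates of `e`.
Complementarity gives `κ f ∈ ℂ e` for every `f`: on a point mass `δ_r`, if `(r, w2)` is free it
lies in the free orbit of `(w1, w2)` and `κ δ_r = ± κ δ_{w1} = ± e`; otherwise some transposition
fixes both `r` and `w2`, and it changes the sign of `κ δ_r`, so `κ δ_r = 0`. As `κ` is symmetric
for the dot product, `e ⬝ᵥ f = (κ f)(w1)`, and `e(w1) = 1` because `(w1, w2)` is free.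
For an invariant `U ≤ V` (James' submodule theorem): if `κ U ≠ 0` then `e ∈ U`, so `U = V`;
otherwise every `f ∈ U` is orthogonal to `e`, hence to all of `V`, and in particular to itself.
-/

open Equiv Finset Matrix

local notation "ε " σ:max => ((Perm.sign σ : ℤ) : ℂ)

namespace Specht

variable {n : ℕ} {w : Fin n → ℕ}

theorem wact_one (u : Fin n → ℕ) : wact 1 u = u := rfl

theorem wact_eq_iff_eq_wact_inv {σ : Perm (Fin n)} {u v : Fin n → ℕ} :
    wact σ u = v ↔ u = wact σ⁻¹ v := by
  constructor <;> rintro rfl <;> simp [wact_wact, wact_one]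

theorem wact_inv_eq_self_iff {σ : Perm (Fin n)} {u : Fin n → ℕ} :
    wact σ⁻¹ u = u ↔ wact σ u = u := by
  rw [eq_comm, ← wact_eq_iff_eq_wact_inv]

theorem ract_ract (σ τ : Perm (Fin n)) (r : Rearr w) :
    ract σ (ract τ r) = ract (σ * τ) r := rfl

theorem ract_one (r : Rearr w) : ract 1 r = r := rfl

theorem ract_eq_iff_eq_ract_inv {σ : Perm (Fin n)} {r s : Rearr w} :
    ract σ r = s ↔ r = ract σ⁻¹ s := by
  simp only [Subtype.ext_iff]
  exact wact_eq_iff_eq_wact_inv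

def ractPerm (σ : Perm (Fin n)) : Perm (Rearr w) where
  toFun := ract σ
  invFun := ract σ⁻¹
  left_inv r := by simp [ract_ract, ract_one]
  right_inv r := by simp [ract_ract, ract_one]

def Rearr.base (w : Fin n → ℕ) : Rearr w := ⟨w, 1, rfl⟩

theorem exists_ract_base (r : Rearr w) : ∃ σ, ract σ (Rearr.base w) = r :=
  let ⟨σ, hσ⟩ := r.2; ⟨σ, Subtype.ext hσ⟩

def factCₗ (σ : Perm (Fin n)) : (Rearr w → ℂ) →ₗ[ℂ] (Rearr w → ℂ) :=
  LinearMap.funLeft ℂ ℂ (ract σ⁻¹)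

theorem factCₗ_apply (σ : Perm (Fin n)) (f : Rearr w → ℂ) :
    factCₗ σ f = factC σ f := rfl

theorem factC_factC (σ τ : Perm (Fin n)) (f : Rearr w → ℂ) :
    factC σ (factC τ f) = factC (σ * τ) f := by
  funext r
  simp only [factC, ract_ract, _root_.mul_inv_rev]

theorem factC_single (σ : Perm (Fin n)) (r : Rearr w) :
    factC σ (Pi.single r 1) = Pi.single (ract σ r) (1 : ℂ) := by
  funext s
  simp only [factC, Pi.single_apply, ract_eq_iff_eq_ract_inv, inv_inv]

theorem factC_dotProduct (σ : Perm (Fin n)) (f g : Rearr w → ℂ) :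
    factC σ f ⬝ᵥ g = f ⬝ᵥ factC σ⁻¹ g := by
  refine Fintype.sum_equiv (ractPerm σ⁻¹) _ _ fun r => ?_
  simp [factC, ractPerm, ract_ract, ract_one]

section

theorem intCast_sign_mul_self (σ : Perm (Fin n)) : ε σ * ε σ = 1 := by
  rw [← Int.cast_mul, ← Units.val_mul, Int.units_mul_self, Units.val_one, Int.cast_one]

variable (w1 w2 : Fin n → ℕ)

theorem spechtCol_apply (r2 : Rearr w2) (r1 : Rearr w1) :
    spechtCol w1 w2 r2 r1 =
      ∑ σ : Perm (Fin n), if wact σ w1 = r1.1 ∧ wact σ w2 = r2.1 then ε σ else 0 := by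
  simp [spechtCol, youngChar]

theorem factC_spechtCol (σ : Perm (Fin n)) (r2 : Rearr w2) :
    factC σ (spechtCol w1 w2 r2) = ε σ • spechtCol w1 w2 (ract σ r2) := by
  funext r
  rw [Pi.smul_apply, smul_eq_mul, factC, spechtCol_apply, spechtCol_apply, Finset.mul_sum]
  refine Fintype.sum_equiv (Equiv.mulLeft σ) _ _ fun π => ?_
  have h1 : wact (σ * π) w1 = r.1 ↔ wact π w1 = (ract σ⁻¹ r).1 := by
    rw [← wact_wact]; exact wact_eq_iff_eq_wact_inv
  have h2 : wact (σ * π) w2 = (ract σ r2).1 ↔ wact π w2 = r2.1 := by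
    rw [← wact_wact, wact_eq_iff_eq_wact_inv]
    simp [ract, wact_wact, wact_one]
  simp only [Equiv.coe_mulLeft, h1, h2, Perm.sign_mul, Units.val_mul, Int.cast_mul]
  split_ifs
  · rw [← mul_assoc, intCast_sign_mul_self, one_mul]
  · rw [mul_zero]

noncomputable abbrev baseCol : Rearr w1 → ℂ := spechtCol w1 w2 (Rearr.base w2)

theorem spechtCol_ract_base (σ : Perm (Fin n)) :
    spechtCol w1 w2 (ract σ (Rearr.base w2)) = ε σ • factC σ (baseCol w1 w2) := by
  rw [factC_spechtCol, smul_smul, intCast_sign_mul_self, one_smul]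

theorem factC_mem_spechtModule (σ : Perm (Fin n)) {f : Rearr w1 → ℂ}
    (hf : f ∈ SpechtModule w1 w2) : factC σ f ∈ SpechtModule w1 w2 := by
  refine Submodule.span_le.2 ?_ (Submodule.apply_mem_span_image_of_mem_span (factCₗ σ) hf)
  rintro _ ⟨_, ⟨r2, rfl⟩, rfl⟩
  rw [factCₗ_apply, factC_spechtCol]
  exact Submodule.smul_mem _ _ (Submodule.subset_span ⟨_, rfl⟩)

theorem spechtModule_le_of_baseCol_mem {U : Submodule ℂ (Rearr w1 → ℂ)}
    (hU : ∀ σ : Perm (Fin n), ∀ f ∈ U, factC σ f ∈ U) (he : baseCol w1 w2 ∈ U) :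
    SpechtModule w1 w2 ≤ U := by
  refine Submodule.span_le.2 ?_
  rintro _ ⟨r2, rfl⟩
  obtain ⟨σ, rfl⟩ := exists_ract_base r2
  rw [spechtCol_ract_base]
  exact U.smul_mem _ (hU σ _ he)

end

def stabFinset (u : Fin n → ℕ) : Finset (Perm (Fin n)) :=
  univ.filter fun σ => wact σ u = u

theorem mem_stabFinset {u : Fin n → ℕ} {σ : Perm (Fin n)} :
    σ ∈ stabFinset u ↔ wact σ u = u := by
  simp [stabFinset]

noncomputable def signedSymm (u : Fin n → ℕ) : (Rearr w → ℂ) →ₗ[ℂ] (Rearr w → ℂ) :=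
  ∑ σ ∈ stabFinset u, ε σ • factCₗ σ

theorem signedSymm_apply (u : Fin n → ℕ) (f : Rearr w → ℂ) :
    signedSymm u f = ∑ σ ∈ stabFinset u, ε σ • factC σ f := by
  simp [signedSymm, factCₗ_apply]

theorem signedSymm_mem {u : Fin n → ℕ} {U : Submodule ℂ (Rearr w → ℂ)}
    (hU : ∀ σ : Perm (Fin n), ∀ f ∈ U, factC σ f ∈ U) {f : Rearr w → ℂ} (hf : f ∈ U) :
    signedSymm u f ∈ U := by
  rw [signedSymm_apply]
  exact U.sum_mem fun σ _ => U.smul_mem _ (hU σ f hf)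

theorem signedSymm_factC {u : Fin n → ℕ} {τ : Perm (Fin n)} (hτ : wact τ u = u)
    (f : Rearr w → ℂ) : signedSymm u (factC τ f) = ε τ • signedSymm u f := by
  rw [signedSymm_apply, signedSymm_apply, Finset.smul_sum]
  refine Finset.sum_equiv (Equiv.mulRight τ) (fun σ => ?_) fun σ _ => ?_
  · simp only [mem_stabFinset, Equiv.coe_mulRight, ← wact_wact, hτ]
  · rw [factC_factC, smul_smul, Equiv.coe_mulRight, Perm.sign_mul, Units.val_mul, Int.cast_mul,
      mul_left_comm, intCast_sign_mul_self, mul_one]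

theorem signedSymm_dotProduct (u : Fin n → ℕ) (g f : Rearr w → ℂ) :
    signedSymm u g ⬝ᵥ f = g ⬝ᵥ signedSymm u f := by
  rw [signedSymm_apply, signedSymm_apply, sum_dotProduct, dotProduct_sum]
  refine Finset.sum_equiv (Equiv.inv _) (fun σ => ?_) fun σ _ => ?_
  · simp only [mem_stabFinset, Equiv.inv_apply, wact_inv_eq_self_iff]
  · simp [smul_dotProduct, dotProduct_smul, factC_dotProduct]

theorem wact_swap_eq_self {π : Perm (Fin n)} {u : Fin n → ℕ} (h : wact π u = u) (i : Fin n) :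
    wact (swap i (π i)) u = u := by
  have hi : u i = u (π i) := by simpa [wact] using congrFun h (π i)
  funext j
  simp only [wact, Function.comp_apply, symm_swap, swap_apply_def]
  split_ifs <;> simp_all

theorem exists_swap_of_not_freePair {p : (Fin n → ℕ) × (Fin n → ℕ)} (h : ¬ FreePair p) :
    ∃ i j : Fin n, i ≠ j ∧ wact (swap i j) p.1 = p.1 ∧ wact (swap i j) p.2 = p.2 := by
  simp only [FreePair, not_forall] at h
  obtain ⟨π, h1, h2, hπ⟩ := h
  obtain ⟨i, hi⟩ : ∃ i, π i ≠ i := by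
    by_contra! hc
    exact hπ (Equiv.ext hc)
  exact ⟨i, π i, hi.symm, wact_swap_eq_self h1 i, wact_swap_eq_self h2 i⟩

theorem signedSymm_single_eq_zero {u : Fin n → ℕ} {r : Rearr w} (h : ¬ FreePair (r.1, u)) :
    signedSymm u (Pi.single r 1) = 0 := by
  obtain ⟨i, j, hij, hr, hu⟩ := exists_swap_of_not_freePair h
  have hfix : factC (swap i j) (Pi.single r 1) = Pi.single r 1 := by
    rw [factC_single]; congr; exact Subtype.ext hr
  have := signedSymm_factC hu (Pi.single r 1)
  rw [hfix, Perm.sign_swap hij, Units.val_neg, Units.val_one, Int.cast_neg, Int.cast_one,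
    neg_one_smul] at this
  exact self_eq_neg.1 this

section

variable (w1 w2 : Fin n → ℕ)

theorem signedSymm_single_base :
    signedSymm w2 (Pi.single (Rearr.base w1) 1) = baseCol w1 w2 := by
  funext r
  rw [signedSymm_apply, baseCol, spechtCol_apply, stabFinset, Finset.sum_filter, Finset.sum_apply]
  refine Finset.sum_congr rfl fun σ _ => ?_
  have hr : r = ract σ (Rearr.base w1) ↔ wact σ w1 = r.1 := by rw [Subtype.ext_iff, eq_comm]; rfl
  rw [ite_apply, Pi.zero_apply, factC_single, Pi.smul_apply, Pi.single_apply]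
  simp only [hr]
  by_cases h1 : wact σ w1 = r.1 <;> by_cases h2 : wact σ w2 = w2 <;> simp [h1, h2, Rearr.base]

theorem baseCol_dotProduct (f : Rearr w1 → ℂ) :
    baseCol w1 w2 ⬝ᵥ f = signedSymm w2 f (Rearr.base w1) := by
  rw [← signedSymm_single_base, signedSymm_dotProduct, single_dotProduct, one_mul]

theorem baseCol_base (h : FreePair (w1, w2)) : baseCol w1 w2 (Rearr.base w1) = 1 := by
  rw [baseCol, spechtCol_apply, Finset.sum_eq_single 1]
  · simp [wact_one, Rearr.base]
  · intro σ _ hσ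
    rw [if_neg fun h' => hσ (h σ h'.1 h'.2)]
  · simp

variable {w1 w2}

theorem signedSymm_single_mem_span (h : Complementary w1 w2) (r : Rearr w1) :
    signedSymm w2 (Pi.single r 1) ∈ ℂ ∙ baseCol w1 w2 := by
  by_cases hfree : FreePair (r.1, w2)
  · obtain ⟨τ, hτ1, hτ2⟩ :=
      h.1.2 (w1, w2) (r.1, w2) ⟨1, rfl⟩ ⟨1, rfl⟩ h.2 r.2 ⟨1, rfl⟩ hfree
    have hr : Pi.single r (1 : ℂ) = factC τ (Pi.single (Rearr.base w1) 1) := by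
      rw [factC_single]; congr; exact (Subtype.ext hτ1).symm
    rw [hr, signedSymm_factC hτ2, signedSymm_single_base]
    exact Submodule.smul_mem _ _ (Submodule.mem_span_singleton_self _)
  · rw [signedSymm_single_eq_zero hfree]
    exact Submodule.zero_mem _

theorem signedSymm_mem_span (h : Complementary w1 w2) (f : Rearr w1 → ℂ) :
    signedSymm w2 f ∈ ℂ ∙ baseCol w1 w2 := by
  rw [← Finset.univ_sum_single f, map_sum]
  refine Submodule.sum_mem _ fun r _ => ?_
  rw [show Pi.single r (f r) = f r • Pi.single r (1 : ℂ) by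
    rw [← Pi.single_smul', smul_eq_mul, mul_one], map_smul]
  exact Submodule.smul_mem _ _ (signedSymm_single_mem_span h r)

theorem star_spechtCol (r2 : Rearr w2) : star (spechtCol w1 w2 r2) = spechtCol w1 w2 r2 := by
  funext r1
  simp [spechtCol]

-- The columns are real, so `f` is also orthogonal to `V` for the definite form `star f ⬝ᵥ g`.
open scoped ComplexOrder in
theorem eq_zero_of_forall_spechtCol_dotProduct_eq_zero {f : Rearr w1 → ℂ}
    (hf : f ∈ SpechtModule w1 w2) (horth : ∀ r2, spechtCol w1 w2 r2 ⬝ᵥ f = 0) : f = 0 := by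
  have hle : SpechtModule w1 w2 ≤ LinearMap.ker (dotProductBilin ℂ ℂ (star f)) := by
    refine Submodule.span_le.2 ?_
    rintro _ ⟨r2, rfl⟩
    simp only [SetLike.mem_coe, LinearMap.mem_ker, dotProductBilin_apply_apply]
    rw [← star_spechtCol, star_dotProduct_star, horth, star_zero]
  exact dotProduct_star_self_eq_zero.1 (hle hf)

theorem spechtCol_dotProduct_eq_zero {U : Submodule ℂ (Rearr w1 → ℂ)}
    (hU : ∀ σ : Perm (Fin n), ∀ f ∈ U, factC σ f ∈ U) (hU0 : ∀ f ∈ U, signedSymm w2 f = 0)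
    {f : Rearr w1 → ℂ} (hf : f ∈ U) (r2 : Rearr w2) : spechtCol w1 w2 r2 ⬝ᵥ f = 0 := by
  obtain ⟨σ, rfl⟩ := exists_ract_base r2
  rw [spechtCol_ract_base, smul_dotProduct, factC_dotProduct, baseCol_dotProduct,
    hU0 _ (hU _ _ hf), Pi.zero_apply, smul_zero]

theorem eq_bot_or_eq_spechtModule (h : Complementary w1 w2) {U : Submodule ℂ (Rearr w1 → ℂ)}
    (hle : U ≤ SpechtModule w1 w2) (hU : ∀ σ : Perm (Fin n), ∀ f ∈ U, factC σ f ∈ U) :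
    U = ⊥ ∨ U = SpechtModule w1 w2 := by
  by_cases hU0 : ∀ f ∈ U, signedSymm w2 f = 0
  · refine Or.inl <| (Submodule.eq_bot_iff U).2 fun f hf => ?_
    exact eq_zero_of_forall_spechtCol_dotProduct_eq_zero (hle hf)
      (spechtCol_dotProduct_eq_zero hU hU0 hf)
  · obtain ⟨f, hf, hf0⟩ := not_forall₂.1 hU0
    obtain ⟨c, hc⟩ := Submodule.mem_span_singleton.1 (signedSymm_mem_span h f)
    have hc0 : c ≠ 0 := by rintro rfl; exact hf0 (by rw [← hc, zero_smul])
    have he : baseCol w1 w2 ∈ U :=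
      (U.smul_mem_iff hc0).1 (hc ▸ signedSymm_mem hU hf)
    exact Or.inr <| le_antisymm hle (spechtModule_le_of_baseCol_mem w1 w2 hU he)

end

end Specht

open Specht

/-- For complementary words `w1, w2`, the Specht module
`V(w1, w2) ⊆ ℂ^{R(w1)}` is nonzero, `S_n`-invariant, and irreducible. -/
theorem specht_stmt_4 {n : ℕ} (w1 w2 : Fin n → ℕ) (h : Complementary w1 w2) :
    SpechtModule w1 w2 ≠ ⊥ ∧
    (∀ σ : Equiv.Perm (Fin n), ∀ f ∈ SpechtModule w1 w2, factC σ f ∈ SpechtModule w1 w2) ∧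
    ∀ U : Submodule ℂ (Rearr w1 → ℂ), U ≤ SpechtModule w1 w2 →
      (∀ σ : Equiv.Perm (Fin n), ∀ f ∈ U, factC σ f ∈ U) →
      U = ⊥ ∨ U = SpechtModule w1 w2 := by
  have he : baseCol w1 w2 ≠ 0 := fun h0 => by
    simpa [h0] using baseCol_base w1 w2 h.2
  refine ⟨?_, fun σ f hf => factC_mem_spechtModule w1 w2 σ hf,
    fun U hle hU => eq_bot_or_eq_spechtModule h hle hU⟩
  exact (Submodule.ne_bot_iff _).2 ⟨_, Submodule.subset_span ⟨_, rfl⟩, he⟩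
end

section
/- Let λ be a partition of n other than (1,1,…,1) (i.e., λ_1 ≥ 2), and let (w1, w2) be a complementary pair of words corresponding to λ. Then the origin of ℝ^{R(w1)} belongs to the Specht polytope P(λ), the convex hull of the columns of the real Specht matrix. -/
theorem exists_ne_apply_eq_of_mem_multMultiset {n : ℕ} {w : Fin n → ℕ} {a : ℕ}
    (ha : a ∈ multMultiset w) (h2a : 2 ≤ a) : ∃ i j, i ≠ j ∧ w i = w j := by
  obtain ⟨v, -, hcard⟩ := Multiset.mem_map.1 ha
  obtain ⟨i, hi, j, hj, hij⟩ :=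
    Finset.one_lt_card.1 (show 1 < (Finset.univ.filter (fun i => w i = v)).card by omega)
  exact ⟨i, j, hij, (Finset.mem_filter.1 hi).2.trans (Finset.mem_filter.1 hj).2.symm⟩

theorem wact_swap_of_apply_eq {n : ℕ} {w : Fin n → ℕ} {i j : Fin n} (h : w i = w j) :
    wact (Equiv.swap i j) w = w := by
  funext k
  simp only [wact, Function.comp_apply, Equiv.symm_swap, Equiv.swap_apply_def]
  split_ifs <;> simp_all

theorem sum_sign_of_wact_eq_eq_zero {n : ℕ} {w : Fin n → ℕ} {i j : Fin n} (hij : i ≠ j)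
    (h : w i = w j) (r : Fin n → ℕ) :
    ∑ σ : Equiv.Perm (Fin n), (if wact σ w = r then (Equiv.Perm.sign σ : ℤ) else 0) = 0 := by
  set f : Equiv.Perm (Fin n) → ℤ := fun σ => if wact σ w = r then (Equiv.Perm.sign σ : ℤ) else 0
  have hf : ∀ σ, f (σ * Equiv.swap i j) = -f σ := by
    intro σ
    simp only [f, ← wact_wact, wact_swap_of_apply_eq h, map_mul, Equiv.Perm.sign_swap hij,
      Units.val_neg, mul_neg, mul_one]
    split_ifs <;> simp
  have hreindex : ∑ σ, f (σ * Equiv.swap i j) = ∑ σ, f σ :=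
    Fintype.sum_equiv (Equiv.mulRight (Equiv.swap i j)) _ _ fun _ => rfl
  rw [Fintype.sum_congr _ _ hf, Finset.sum_neg_distrib] at hreindex
  exact neg_eq_self.1 hreindex

theorem sum_youngChar_right {n : ℕ} (w1 w2 r1 : Fin n → ℕ) :
    ∑ r2 : Rearr w2, youngChar w1 w2 r1 r2.1 =
      ∑ σ : Equiv.Perm (Fin n), if wact σ w1 = r1 then (Equiv.Perm.sign σ : ℤ) else 0 := by
  unfold youngChar
  rw [Finset.sum_comm]
  refine Fintype.sum_congr _ _ fun σ => ?_
  have hunique : ∀ r2 : Rearr w2, wact σ w2 = r2.1 ↔ ⟨wact σ w2, σ, rfl⟩ = r2 :=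
    fun r2 => by rw [Subtype.ext_iff]
  simp only [hunique, ite_and]
  split_ifs <;> simp

theorem zero_mem_convexHull_range_of_sum_eq_zero {ι E : Type*} [Fintype ι] [Nonempty ι]
    [AddCommGroup E] [Module ℝ E] {v : ι → E} (h : ∑ i, v i = 0) :
    (0 : E) ∈ convexHull ℝ (Set.range v) := by
  have hbarycentre : Finset.univ.centerMass (fun _ => (1 : ℝ)) v = 0 := by
    simp only [Finset.centerMass, one_smul, h, smul_zero]
  rw [← hbarycentre]
  exact Finset.centerMass_mem_convexHull _ (fun _ _ => zero_le_one)
    (by simpa using Fintype.card_pos) fun i _ => Set.mem_range_self i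

theorem sum_spechtColR_eq_zero {n : ℕ} {w1 : Fin n → ℕ} {i j : Fin n} (hij : i ≠ j)
    (h : w1 i = w1 j) (w2 : Fin n → ℕ) : ∑ r2 : Rearr w2, spechtColR w1 w2 r2 = 0 := by
  funext r1
  simp only [Finset.sum_apply, spechtColR, ← Int.cast_sum, sum_youngChar_right,
    sum_sign_of_wact_eq_eq_zero hij h, Int.cast_zero, Pi.zero_apply]

theorem specht_stmt_10_general {n : ℕ} (l : List ℕ)
    (hne : 2 ≤ l.getD 0 0)
    (w1 w2 : Fin n → ℕ) (hcorr : CorrespondsTo w1 w2 l) :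
    (0 : Rearr w1 → ℝ) ∈ SpechtPolytope w1 w2 := by
  obtain ⟨a, t, rfl⟩ : ∃ a t, l = a :: t :=
    List.exists_cons_of_ne_nil fun hl => by simp [hl] at hne
  have ha : a ∈ multMultiset w1 := by
    rw [← hcorr.1.2]
    exact List.mem_cons_self
  obtain ⟨i, j, hij, hw⟩ := exists_ne_apply_eq_of_mem_multMultiset ha hne
  have : Nonempty (Rearr w2) := ⟨⟨w2, 1, rfl⟩⟩
  exact zero_mem_convexHull_range_of_sum_eq_zero (sum_spechtColR_eq_zero hij hw w2)

/-- If `λ` is a partition of `n` other than `(1,1,…,1)` (i.e. `λ_1 ≥ 2`),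
then the origin belongs to the Specht polytope `P(λ)`. -/
theorem specht_stmt_10 {n : ℕ} (l : List ℕ) (hl : SortedPartList l) (hsum : l.sum = n)
    (hne : 2 ≤ l.getD 0 0)
    (w1 w2 : Fin n → ℕ) (hc : Complementary w1 w2) (hcorr : CorrespondsTo w1 w2 l) :
    (0 : Rearr w1 → ℝ) ∈ SpechtPolytope w1 w2 :=
  specht_stmt_10_general l hne w1 w2 hcorr
end

section
/- Let n ≥ 2 and let λ = (2, 1, 1, …, 1) be the partition of n with λ_1 = 2 and all other parts 1, with complementary pair (w1, w2) corresponding to λ. Then R(w2) has exactly n elements, the n columns of the real Specht matrix are pairwise distinct and affinely independent, and the Specht polytope P(λ) is an (n−1)-dimensional simplex (a convex hull of n affinely independent points, of affine dimension n−1). -/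
/-!
For `λ = (2, 1, …, 1)` the stabiliser of `w1` is `{1, (a b)}`, where `a, b` carry the repeated
letter, and `w2` has a single odd letter, which freeness of `(w1, w2)` places at `a` or `b`.
Hence `R(w2)` is indexed by the position `i` of the odd letter, and the row of the Specht matrix
at `σ·w1` is `sign σ (e_{σ a} - e_{σ b})`. A combination `∑ tᵢ colᵢ = 0` with `∑ tᵢ = 0` thus
forces `t (σ a) = t (σ b)` for every `σ`, so `t` is constant and therefore zero.
-/

open Finset Equiv

section Multiplicities

variable {n : ℕ} {w : Fin n → ℕ}

lemma conjList_two_cons_replicate_one (hn : 2 ≤ n) :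
    conjList (2 :: List.replicate (n - 2) 1) = [n - 1, 1] := by
  obtain ⟨m, rfl⟩ := Nat.exists_eq_add_of_le' hn
  simp [conjList, List.range_succ]

lemma card_fiber_mem_multMultiset (w : Fin n → ℕ) (i : Fin n) :
    #{j | w j = w i} ∈ multMultiset w :=
  Multiset.mem_map_of_mem _ (mem_image_of_mem w (mem_univ i))

lemma exists_fiber_eq_singleton_of_one_mem (h : 1 ∈ multMultiset w) :
    ∃ p, ∀ j, w j = w p → j = p := by
  obtain ⟨v, -, hv⟩ := Multiset.mem_map.1 h
  obtain ⟨p, hp⟩ := card_eq_one.1 hv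
  have hfib : ∀ j, w j = v ↔ j = p := fun j => by
    simpa using congrArg (j ∈ ·) hp
  exact ⟨p, fun j hj => (hfib j).1 (hj.trans ((hfib p).2 rfl))⟩

lemma exists_eq_update_const_of_card_multMultiset (h : Multiset.card (multMultiset w) = 2)
    {p : Fin n} (hp : ∀ j, w j = w p → j = p) :
    ∃ c u, u ≠ c ∧ w = Function.update (fun _ => c) p u := by
  rw [multMultiset, Multiset.card_map, card_val] at h
  obtain ⟨x, y, hxy, hI⟩ := card_eq_two.1 h
  have hmem : ∀ j, w j = x ∨ w j = y := fun j => by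
    simpa [hI] using mem_image_of_mem w (mem_univ j)
  obtain ⟨c, hc, hcx⟩ : ∃ c, (c = x ∨ c = y) ∧ c ≠ w p := by
    rcases hmem p with h | h
    · exact ⟨y, Or.inr rfl, h ▸ hxy.symm⟩
    · exact ⟨x, Or.inl rfl, h ▸ hxy⟩
  refine ⟨c, w p, hcx.symm, funext fun j => ?_⟩
  rcases eq_or_ne j p with rfl | hjp
  · simp
  · have hne : w j ≠ w p := mt (hp j) hjp
    rw [Function.update_of_ne hjp]
    grind

lemma eq_of_card_fiber_eq_of_count_le_one {k : ℕ} (hk : (multMultiset w).count k ≤ 1)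
    {i j : Fin n} (hi : #{l | w l = w i} = k) (hj : #{l | w l = w j} = k) : w i = w j := by
  rw [multMultiset, Multiset.count_map, ← filter_val, card_val] at hk
  exact card_le_one.1 hk _ (by simp [hi]) _ (by simp [hj])

lemma exists_pair_of_two_mem_multMultiset (h2 : 2 ∈ multMultiset w)
    (hle : ∀ k ∈ multMultiset w, k ≤ 2) (hcount : (multMultiset w).count 2 ≤ 1) :
    ∃ a b, a ≠ b ∧ w a = w b ∧ ∀ i j, i ≠ j → w i = w j → i = a ∨ i = b := by
  obtain ⟨v, -, hv⟩ := Multiset.mem_map.1 h2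
  obtain ⟨a, b, hab, hfib⟩ := card_eq_two.1 hv
  have hmem : ∀ j, w j = v ↔ j = a ∨ j = b := fun j => by
    simpa using congrArg (j ∈ ·) hfib
  have ha : w a = v := (hmem a).2 (Or.inl rfl)
  refine ⟨a, b, hab, ha.trans ((hmem b).2 (Or.inr rfl)).symm, fun i j hij hwij => ?_⟩
  have hi : #{l | w l = w i} = 2 := by
    refine le_antisymm (hle _ (card_fiber_mem_multMultiset w i)) ?_
    exact one_lt_card.2 ⟨i, by simp, j, by simp [hwij], hij⟩
  have ha2 : #{l | w l = w a} = 2 := by rw [ha]; exact hv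
  exact (hmem i).1 ((eq_of_card_fiber_eq_of_count_le_one hcount hi ha2).trans ha)

end Multiplicities

section Stabilizers

variable {n : ℕ}

lemma wact_eq_self_iff {σ : Perm (Fin n)} {w : Fin n → ℕ} :
    wact σ w = w ↔ ∀ i, w (σ i) = w i := by
  refine ⟨fun h i => ?_, fun h => funext fun i => ?_⟩
  · simpa [wact] using (congrFun h (σ i)).symm
  · simpa [wact] using (h (σ.symm i)).symm

lemma wact_eq_wact_iff {σ τ : Perm (Fin n)} {w : Fin n → ℕ} :
    wact σ w = wact τ w ↔ wact (σ⁻¹ * τ) w = w := by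
  constructor
  · intro h
    rw [← wact_wact, ← h, wact_wact, inv_mul_cancel]
    rfl
  · intro h
    calc wact σ w = wact σ (wact (σ⁻¹ * τ) w) := by rw [h]
      _ = wact τ w := by rw [wact_wact, mul_inv_cancel_left]

lemma wact_eq_self_iff_of_pair {w : Fin n → ℕ} {a b : Fin n} (hab : a ≠ b) (hwab : w a = w b)
    (hpair : ∀ i j, i ≠ j → w i = w j → i = a ∨ i = b) (σ : Perm (Fin n)) :
    wact σ w = w ↔ σ = 1 ∨ σ = swap a b := by
  rw [wact_eq_self_iff]
  constructor
  · intro hσ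
    have hfix : ∀ i, i ≠ a → i ≠ b → σ i = i := fun i hia hib => by
      by_contra hi
      exact (hpair i (σ i) (Ne.symm hi) (hσ i).symm).elim hia hib
    have hmove : ∀ i, σ i ≠ i → σ i = a ∨ σ i = b := fun i hi => hpair _ _ hi (hσ i)
    by_cases ha : σ a = a
    · have hb : σ b = b := by
        by_contra hb
        exact (hmove b hb).elim (fun h => hab (σ.injective (ha.trans h.symm))) hb
      left; ext i
      by_cases hia : i = a <;> by_cases hib : i = b <;> simp_all
    · have hab' : σ a = b := (hmove a ha).resolve_left ha
      have hb : σ b = a := by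
        have hbb : σ b ≠ b := fun h => hab (σ.injective (hab'.trans h.symm))
        exact (hmove b hbb).resolve_right hbb
      right; ext i
      by_cases hia : i = a <;> by_cases hib : i = b <;>
        simp_all [swap_apply_of_ne_of_ne]
  · rintro (rfl | rfl) i
    · rfl
    · rcases eq_or_ne i a with rfl | hia
      · simp [hwab]
      rcases eq_or_ne i b with rfl | hib
      · simp [hwab]
      · rw [swap_apply_of_ne_of_ne hia hib]

lemma apply_eq_of_forall_perm_apply_eq {α β : Type*} [DecidableEq α] {c : α → β}
    {a b : α} (hab : a ≠ b) (h : ∀ σ : Perm α, c (σ a) = c (σ b)) (i : α) : c i = c a := by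
  rcases eq_or_ne i a with rfl | hia
  · rfl
  rcases eq_or_ne i b with rfl | hib
  · exact (h 1).symm
  · simpa [swap_apply_of_ne_of_ne hab hia.symm] using (h (swap b i)).symm

end Stabilizers

section YoungCharacter

variable {n : ℕ}

lemma youngChar_wact_of_stabilizer_eq_pair {w1 w2 : Fin n → ℕ} {a b : Fin n} (hab : a ≠ b)
    (hstab : ∀ σ, wact σ w1 = w1 ↔ σ = 1 ∨ σ = swap a b) (σ : Perm (Fin n)) (x : Fin n → ℕ) :
    youngChar w1 w2 (wact σ w1) x =
      Perm.sign σ * ((if wact σ w2 = x then 1 else 0) -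
        (if wact (σ * swap a b) w2 = x then 1 else 0)) := by
  have hcoset : ∀ ρ, wact (σ * ρ) w1 = wact σ w1 ↔ ρ ∈ ({1, swap a b} : Finset _) := by
    intro ρ
    rw [eq_comm, wact_eq_wact_iff, inv_mul_cancel_left, hstab]
    simp
  rw [youngChar, ← Equiv.sum_comp (Equiv.mulLeft σ)]
  simp only [coe_mulLeft, hcoset, ite_and]
  rw [sum_ite_mem, univ_inter, sum_pair (Ne.symm (swap_eq_one_iff.not.2 hab))]
  simp only [mul_one, Perm.sign_mul, Perm.sign_swap hab, mul_neg, Units.val_neg]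
  split_ifs <;> ring

end YoungCharacter

section HookShape

variable {n : ℕ} {c u : ℕ}

lemma wact_update_const (σ : Perm (Fin n)) (p : Fin n) :
    wact σ (Function.update (fun _ => c) p u) = Function.update (fun _ => c) (σ p) u := by
  funext j
  simp [wact, Function.update_apply, symm_apply_eq]

lemma update_const_injective (huc : u ≠ c) :
    Function.Injective fun p : Fin n => Function.update (fun _ => c) p u := by
  intro p q h
  by_contra hpq
  simpa [Function.update_of_ne hpq, huc] using congrFun h p

noncomputable def rearrUpdateConstEquiv (huc : u ≠ c) (p : Fin n) :
    Fin n ≃ Rearr (Function.update (fun _ => c) p u) :=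
  Equiv.ofBijective
    (fun i => ⟨Function.update (fun _ => c) i u, swap p i, by
      rw [wact_update_const, swap_apply_left]⟩)
    ⟨fun i j h => update_const_injective huc (congrArg Subtype.val h),
      fun ⟨_, σ, hσ⟩ => ⟨σ p, Subtype.ext ((wact_update_const σ p).symm.trans hσ)⟩⟩

@[simp]
lemma rearrUpdateConstEquiv_coe (huc : u ≠ c) (p i : Fin n) :
    (rearrUpdateConstEquiv huc p i : Fin n → ℕ) = Function.update (fun _ => c) i u :=
  rfl

lemma eq_or_eq_of_freePair_update_const {w1 : Fin n → ℕ} {a b p : Fin n} (hab : a ≠ b)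
    (hτ : wact (swap a b) w1 = w1) (hfree : FreePair (w1, Function.update (fun _ => c) p u)) :
    p = a ∨ p = b := by
  by_contra! hp
  refine swap_eq_one_iff.not.2 hab (hfree _ hτ ?_)
  rw [wact_update_const, swap_apply_of_ne_of_ne hp.1 hp.2]

variable {w1 : Fin n → ℕ} {a b : Fin n}

lemma spechtColR_rearrUpdateConstEquiv (huc : u ≠ c) (hab : a ≠ b)
    (hstab : ∀ σ, wact σ w1 = w1 ↔ σ = 1 ∨ σ = swap a b) (σ : Perm (Fin n)) (i : Fin n) :
    spechtColR w1 (Function.update (fun _ => c) a u) (rearrUpdateConstEquiv huc a i)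
        ⟨wact σ w1, σ, rfl⟩ =
      Perm.sign σ * ((if σ a = i then 1 else 0) - (if σ b = i then 1 else 0)) := by
  rw [spechtColR, youngChar_wact_of_stabilizer_eq_pair hab hstab]
  simp only [rearrUpdateConstEquiv_coe, wact_update_const, (update_const_injective huc).eq_iff,
    Perm.mul_apply, swap_apply_left]
  push_cast
  rfl

theorem affineIndependent_spechtColR_of_stabilizer_eq_pair (huc : u ≠ c) (hab : a ≠ b)
    (hstab : ∀ σ, wact σ w1 = w1 ↔ σ = 1 ∨ σ = swap a b) :
    AffineIndependent ℝ (spechtColR w1 (Function.update (fun _ => c) a u)) := by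
  rw [← affineIndependent_equiv (rearrUpdateConstEquiv huc a), affineIndependent_iff_of_fintype]
  intro t hsum hcomb
  rw [weightedVSub_eq_linear_combination _ hsum] at hcomb
  have hrow : ∀ σ : Perm (Fin n), t (σ a) = t (σ b) := by
    intro σ
    have := congrFun hcomb ⟨wact σ w1, σ, rfl⟩
    simp only [Finset.sum_apply, Pi.smul_apply, smul_eq_mul, Function.comp_apply,
      spechtColR_rearrUpdateConstEquiv huc hab hstab] at this
    simpa [mul_sub, sum_sub_distrib, mul_left_comm _ (Perm.sign σ : ℝ), sub_eq_zero] using this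
  have hconst := apply_eq_of_forall_perm_apply_eq hab hrow
  have hta : t a = 0 := by
    simpa [hconst, (Fin.pos a).ne'] using hsum
  intro i
  rw [hconst, hta]

end HookShape

/-- For `λ = (2,1,…,1)` a partition of `n ≥ 2`, the set `R(w2)` has
exactly `n` elements, the `n` columns of the real Specht matrix are pairwise distinct
and affinely independent, and the Specht polytope is an `(n-1)`-dimensional simplex. -/
theorem specht_stmt_12 {n : ℕ} (hn : 2 ≤ n) (w1 w2 : Fin n → ℕ)
    (hc : Complementary w1 w2)
    (hcorr : CorrespondsTo w1 w2 (2 :: List.replicate (n - 2) 1)) :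
    Nat.card (Rearr w2) = n ∧
    Function.Injective (spechtColR w1 w2) ∧
    AffineIndependent ℝ (spechtColR w1 w2) ∧
    Module.finrank ℝ (affineSpan ℝ (SpechtPolytope w1 w2)).direction = n - 1 := by
  obtain ⟨⟨-, hm1⟩, ⟨-, hm2⟩⟩ := hcorr
  rw [conjList_two_cons_replicate_one hn] at hm2
  obtain ⟨p, hp⟩ := exists_fiber_eq_singleton_of_one_mem (w := w2) (by simp [← hm2])
  obtain ⟨c, u, huc, rfl⟩ := exists_eq_update_const_of_card_multMultiset (by simp [← hm2]) hp
  obtain ⟨a, b, hab, hwab, hpair⟩ := exists_pair_of_two_mem_multMultiset (w := w1)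
    (by simp [← hm1]) (by simp [← hm1]) (by simp [← hm1, List.count_replicate])
  have hstab := wact_eq_self_iff_of_pair hab hwab hpair
  obtain ⟨a, b, rfl, hab, hstab⟩ : ∃ a b, p = a ∧ a ≠ b ∧
      ∀ σ, wact σ w1 = w1 ↔ σ = 1 ∨ σ = swap a b := by
    rcases eq_or_eq_of_freePair_update_const hab ((hstab _).2 (Or.inr rfl)) hc.2 with rfl | rfl
    · exact ⟨p, b, rfl, hab, hstab⟩
    · exact ⟨p, a, rfl, hab.symm, by simpa [swap_comm] using hstab⟩
  have haff := affineIndependent_spechtColR_of_stabilizer_eq_pair huc hab hstab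
  have hcard : Nat.card (Rearr (Function.update (fun _ => c) p u)) = n :=
    Nat.card_eq_of_equiv_fin (rearrUpdateConstEquiv huc p).symm
  refine ⟨hcard, haff.injective, haff, ?_⟩
  rw [SpechtPolytope, affineSpan_convexHull, direction_affineSpan]
  exact haff.finrank_vectorSpan (by rw [← Nat.card_eq_fintype_card, hcard]; omega)
end

section
/- Let n ≥ 1 and let S be a nonempty proper subset of {0, 1, …, n}, with complement T. Then the maximum of the linear functional x ↦ Σ_{i∈S} x_i over the root polytope P_{A_n} equals 1, and the set of maximizers F_S = {x ∈ P_{A_n} : Σ_{i∈S} x_i = 1} is an exposed face of P_{A_n} equal to the convex hull of {e_i − e_j : i ∈ S, j ∈ T}; this face has affine dimension n − 1 (it is a facet, congruent to the product of simplices Δ_S × Δ_T), and the 2^{n+1} − 2 faces F_S for distinct nonempty proper S are pairwise distinct. -/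
/-!
On the root `e_i − e_j` the functional `σ_S x = ∑_{i∈S} x_i` takes the value
`[i ∈ S] − [j ∈ S] ≤ 1`, with equality exactly for the roots crossing from `S` to `T`. Since a
linear functional that is `≤ c` on a set `V` attains `c` on `convexHull V` only on the hull of
`{v ∈ V | f v = c}`, the maximum is `1` and `F_S` is the hull of the crossing roots. Their
differences span the kernel of `x ↦ (σ_S x, σ_T x)`, a surjection onto `ℝ²`, so `F_S` has
dimension `n + 1 − 2`. Finally `S` is recovered from `F_S` as the set of `i` with
`e_i − e_j ∈ F_S` for some `j`.
-/

open Module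

/-- The set of roots `e_i − e_j` (`i ≠ j`) of type `A_n` in `ℝ^{n+1}`. -/
def rootVectors (n : ℕ) : Set (Fin (n + 1) → ℝ) :=
  {x | ∃ i j : Fin (n + 1), i ≠ j ∧ x = Pi.single i 1 - Pi.single j 1}

/-- The root polytope `P_{A_n}`: the convex hull of the roots `e_i − e_j`. -/
noncomputable def rootPolytope (n : ℕ) : Set (Fin (n + 1) → ℝ) :=
  convexHull ℝ (rootVectors n)

section Convex

variable {𝕜 E : Type*} [Field 𝕜] [LinearOrder 𝕜] [IsStrictOrderedRing 𝕜] [AddCommGroup E]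
  [Module 𝕜 E]

theorem sep_convexHull_eq_convexHull_sep_of_le {V : Set E} {f : E →ₗ[𝕜] 𝕜} {c : 𝕜}
    (hf : ∀ v ∈ V, f v ≤ c) :
    {x ∈ convexHull 𝕜 V | f x = c} = convexHull 𝕜 {v ∈ V | f v = c} := by
  classical
  refine Set.Subset.antisymm ?_ fun x hx =>
    ⟨convexHull_mono (Set.sep_subset _ _) hx,
      convexHull_min (fun v hv => hv.2) (convex_hyperplane f.isLinear c) hx⟩
  rintro x ⟨hx, hfx⟩
  rw [convexHull_eq] at hx
  obtain ⟨ι, t, w, z, hw₀, hw₁, hz, rfl⟩ := hx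
  -- `c = f x` is a convex combination of the values `f (z i) ≤ c`, so every weighted gap vanishes
  have hgap : ∀ i ∈ t, w i * (c - f (z i)) = 0 := by
    refine (Finset.sum_eq_zero_iff_of_nonneg fun i hi =>
      mul_nonneg (hw₀ i hi) (sub_nonneg.2 (hf _ (hz i hi)))).1 ?_
    rw [← hfx, Finset.centerMass_eq_of_sum_1 _ _ hw₁, map_sum]
    simp only [map_smul, smul_eq_mul, mul_sub, Finset.sum_sub_distrib, ← Finset.sum_mul, hw₁,
      one_mul, sub_self]
  rw [← Finset.centerMass_filter_ne_zero]
  refine Finset.centerMass_mem_convexHull _ (fun i hi => hw₀ i (Finset.mem_filter.1 hi).1)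
    (by rw [Finset.sum_filter_ne_zero, hw₁]; exact one_pos) fun i hi => ?_
  obtain ⟨hit, hwi⟩ := Finset.mem_filter.1 hi
  exact ⟨hz i hit, (sub_eq_zero.1 ((mul_eq_zero.1 (hgap i hit)).resolve_left hwi)).symm⟩

end Convex

theorem isExposed_sep_eq_of_isGreatest {𝕜 E : Type*} [TopologicalSpace 𝕜] [Semiring 𝕜]
    [PartialOrder 𝕜] [AddCommMonoid E] [TopologicalSpace E] [Module 𝕜 E] {A : Set E}
    {l : StrongDual 𝕜 E} {c : 𝕜} (h : IsGreatest (l '' A) c) :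
    IsExposed 𝕜 A {x ∈ A | l x = c} := by
  refine fun _ => ⟨l, Set.ext fun x => and_congr_right fun hx => ?_⟩
  obtain ⟨⟨y, hy, rfl⟩, hmax⟩ := h
  exact ⟨fun hxy z hz => hxy ▸ hmax ⟨z, hz, rfl⟩,
    fun hx' => le_antisymm (hmax ⟨x, hx, rfl⟩) (hx' y hy)⟩

theorem Finset.exists_notMem_of_ne_univ {ι : Type*} [Fintype ι] {S : Finset ι}
    (hS : S ≠ Finset.univ) : ∃ b, b ∉ S :=
  not_forall.1 (mt Finset.eq_univ_iff_forall.2 hS)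

section Roots

variable {ι : Type*} [DecidableEq ι]

def sumCoords (S : Finset ι) : (ι → ℝ) →ₗ[ℝ] ℝ where
  toFun x := ∑ i ∈ S, x i
  map_add' _ _ := Finset.sum_add_distrib
  map_smul' _ _ := (Finset.mul_sum ..).symm

theorem sumCoords_single (T : Finset ι) (a : ι) :
    sumCoords T (Pi.single a 1) = if a ∈ T then 1 else 0 := by
  simp [sumCoords, Finset.sum_pi_single']

theorem sumCoords_single_sub_single (T : Finset ι) (a b : ι) :
    sumCoords T (Pi.single a 1 - Pi.single b 1) =
      (if a ∈ T then 1 else 0) - (if b ∈ T then 1 else 0) := by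
  rw [map_sub, sumCoords_single, sumCoords_single]

theorem sumCoords_single_sub_single_le_one (T : Finset ι) (a b : ι) :
    sumCoords T (Pi.single a 1 - Pi.single b 1) ≤ 1 := by
  rw [sumCoords_single_sub_single]
  split_ifs <;> norm_num

theorem sumCoords_single_sub_single_eq_one_iff {T : Finset ι} {a b : ι} :
    sumCoords T (Pi.single a 1 - Pi.single b 1) = 1 ↔ a ∈ T ∧ b ∉ T := by
  rw [sumCoords_single_sub_single]
  split_ifs <;> norm_num [*]

def crossingRoots (S : Finset ι) : Set (ι → ℝ) :=
  {x | ∃ i ∈ S, ∃ j ∉ S, x = Pi.single i 1 - Pi.single j 1}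

theorem single_sub_single_mem_vectorSpan_crossingRoots {S : Finset ι} {i₀ j₀ : ι}
    (hi₀ : i₀ ∈ S) (hj₀ : j₀ ∉ S) {a b : ι} (hab : a ∈ S ↔ b ∈ S) :
    (Pi.single a 1 - Pi.single b 1 : ι → ℝ) ∈ vectorSpan ℝ (crossingRoots S) := by
  by_cases ha : a ∈ S
  · have hdiff := vsub_mem_vectorSpan ℝ
      (show (Pi.single a 1 - Pi.single j₀ 1 : ι → ℝ) ∈ crossingRoots S from ⟨a, ha, j₀, hj₀, rfl⟩)
      (show (Pi.single b 1 - Pi.single j₀ 1 : ι → ℝ) ∈ crossingRoots S from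
        ⟨b, hab.1 ha, j₀, hj₀, rfl⟩)
    rwa [vsub_eq_sub, sub_sub_sub_cancel_right] at hdiff
  · have hdiff := vsub_mem_vectorSpan ℝ
      (show (Pi.single i₀ 1 - Pi.single b 1 : ι → ℝ) ∈ crossingRoots S from
        ⟨i₀, hi₀, b, mt hab.2 ha, rfl⟩)
      (show (Pi.single i₀ 1 - Pi.single a 1 : ι → ℝ) ∈ crossingRoots S from ⟨i₀, hi₀, a, ha, rfl⟩)
    rwa [vsub_eq_sub, sub_sub_sub_cancel_left] at hdiff

theorem vectorSpan_crossingRoots [Fintype ι] {S : Finset ι} {i₀ j₀ : ι} (hi₀ : i₀ ∈ S)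
    (hj₀ : j₀ ∉ S) :
    vectorSpan ℝ (crossingRoots S) = LinearMap.ker ((sumCoords S).prod (sumCoords Sᶜ)) := by
  refine le_antisymm ?_ fun v hv => ?_
  · have hconst : ∀ x ∈ crossingRoots S, (sumCoords S).prod (sumCoords Sᶜ) x = (1, -1) := by
      rintro _ ⟨a, ha, b, hb, rfl⟩
      simp [sumCoords_single_sub_single, ha, hb]
    rw [vectorSpan_def, Submodule.span_le]
    rintro _ ⟨x, hx, y, hy, rfl⟩
    change x - y ∈ LinearMap.ker _
    rw [LinearMap.mem_ker, map_sub, hconst x hx, hconst y hy, sub_self]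
  obtain ⟨hvS, hvSc⟩ := Prod.mk_eq_zero.1 (LinearMap.mem_ker.1 hv)
  -- the coordinates of `v` sum to `0` on `S` and on `Sᶜ`, so the `e_{i₀}`, `e_{j₀}` terms cancel
  have hdecomp : v = ∑ i ∈ S, v i • (Pi.single i 1 - Pi.single i₀ 1 : ι → ℝ)
      + ∑ j ∈ Sᶜ, v j • (Pi.single j 1 - Pi.single j₀ 1 : ι → ℝ) := by
    simp only [smul_sub, Finset.sum_sub_distrib, ← Finset.sum_smul]
    change v = _ - sumCoords S v • _ + (_ - sumCoords Sᶜ v • _)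
    rw [hvS, hvSc, zero_smul, zero_smul, sub_zero, sub_zero, Finset.sum_add_sum_compl,
      ← pi_eq_sum_univ' v]
  rw [hdecomp]
  refine add_mem (Submodule.sum_mem _ fun i hi => Submodule.smul_mem _ _ ?_)
    (Submodule.sum_mem _ fun j hj => Submodule.smul_mem _ _ ?_)
  · exact single_sub_single_mem_vectorSpan_crossingRoots hi₀ hj₀ (iff_of_true hi hi₀)
  · exact single_sub_single_mem_vectorSpan_crossingRoots hi₀ hj₀
      (iff_of_false (Finset.mem_compl.1 hj) hj₀)

theorem finrank_vectorSpan_crossingRoots [Fintype ι] {S : Finset ι} (hS : S.Nonempty)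
    (hS' : S ≠ Finset.univ) :
    finrank ℝ (vectorSpan ℝ (crossingRoots S)) = Fintype.card ι - 2 := by
  obtain ⟨i₀, hi₀⟩ := hS
  obtain ⟨j₀, hj₀⟩ := Finset.exists_notMem_of_ne_univ hS'
  rw [vectorSpan_crossingRoots hi₀ hj₀]
  set L := (sumCoords S).prod (sumCoords Sᶜ)
  have hsurj : LinearMap.range L = ⊤ := LinearMap.range_eq_top.2 fun p =>
    ⟨p.1 • Pi.single i₀ 1 + p.2 • Pi.single j₀ 1, by
      simp [L, sumCoords_single, hi₀, hj₀]⟩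
  have hrank := LinearMap.finrank_range_add_finrank_ker L
  rw [hsurj, finrank_top, finrank_prod, finrank_self, finrank_fintype_fun_eq_card] at hrank
  omega

end Roots

theorem Finset.eq_of_forall_mem_and_notMem_iff {ι : Type*} [Fintype ι] {S S' : Finset ι}
    (hS : S ≠ Finset.univ) (hS' : S' ≠ Finset.univ)
    (h : ∀ a b, a ≠ b → (a ∈ S ∧ b ∉ S ↔ a ∈ S' ∧ b ∉ S')) : S = S' := by
  obtain ⟨b, hb⟩ := Finset.exists_notMem_of_ne_univ hS
  obtain ⟨b', hb'⟩ := Finset.exists_notMem_of_ne_univ hS'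
  ext i
  exact ⟨fun hi => ((h i b (ne_of_mem_of_not_mem hi hb)).1 ⟨hi, hb⟩).1,
    fun hi => ((h i b' (ne_of_mem_of_not_mem hi hb')).2 ⟨hi, hb'⟩).1⟩

section RootPolytope

variable {n : ℕ}

theorem single_sub_single_mem_rootPolytope {i j : Fin (n + 1)} (hij : i ≠ j) :
    (Pi.single i 1 - Pi.single j 1 : Fin (n + 1) → ℝ) ∈ rootPolytope n :=
  subset_convexHull ℝ _ ⟨i, j, hij, rfl⟩

theorem sumCoords_le_one_of_mem_rootPolytope (S : Finset (Fin (n + 1))) {x : Fin (n + 1) → ℝ}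
    (hx : x ∈ rootPolytope n) : sumCoords S x ≤ 1 := by
  refine convexHull_min ?_ (convex_halfSpace_le (sumCoords S).isLinear 1) hx
  rintro _ ⟨a, b, -, rfl⟩
  exact sumCoords_single_sub_single_le_one S a b

theorem isGreatest_sumCoords_image_rootPolytope {S : Finset (Fin (n + 1))} (hS : S.Nonempty)
    (hS' : S ≠ Finset.univ) : IsGreatest (sumCoords S '' rootPolytope n) 1 := by
  obtain ⟨i, hi⟩ := hS
  obtain ⟨j, hj⟩ := Finset.exists_notMem_of_ne_univ hS'
  exact ⟨⟨_, single_sub_single_mem_rootPolytope (ne_of_mem_of_not_mem hi hj),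
    sumCoords_single_sub_single_eq_one_iff.2 ⟨hi, hj⟩⟩,
    Set.forall_mem_image.2 fun _ => sumCoords_le_one_of_mem_rootPolytope S⟩

theorem sep_rootVectors_sumCoords_eq_one (S : Finset (Fin (n + 1))) :
    {v ∈ rootVectors n | sumCoords S v = 1} = crossingRoots S := by
  ext v
  constructor
  · rintro ⟨⟨a, b, -, rfl⟩, hv⟩
    obtain ⟨ha, hb⟩ := sumCoords_single_sub_single_eq_one_iff.1 hv
    exact ⟨a, ha, b, hb, rfl⟩
  · rintro ⟨a, ha, b, hb, rfl⟩
    exact ⟨⟨a, b, ne_of_mem_of_not_mem ha hb, rfl⟩,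
      sumCoords_single_sub_single_eq_one_iff.2 ⟨ha, hb⟩⟩

theorem sep_rootPolytope_sumCoords_eq_one (S : Finset (Fin (n + 1))) :
    {x ∈ rootPolytope n | sumCoords S x = 1} = convexHull ℝ (crossingRoots S) := by
  rw [rootPolytope, sep_convexHull_eq_convexHull_sep_of_le, sep_rootVectors_sumCoords_eq_one]
  exact fun v hv => sumCoords_le_one_of_mem_rootPolytope S (subset_convexHull ℝ _ hv)

theorem single_sub_single_mem_sep_rootPolytope_iff {S : Finset (Fin (n + 1))}
    {a b : Fin (n + 1)} (hab : a ≠ b) :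
    Pi.single a 1 - Pi.single b 1 ∈ {x ∈ rootPolytope n | sumCoords S x = 1} ↔
      a ∈ S ∧ b ∉ S :=
  (and_iff_right (single_sub_single_mem_rootPolytope hab)).trans
    sumCoords_single_sub_single_eq_one_iff

theorem eq_of_sep_rootPolytope_sumCoords_eq_one {S S' : Finset (Fin (n + 1))}
    (hS : S ≠ Finset.univ) (hS' : S' ≠ Finset.univ)
    (h : {x ∈ rootPolytope n | sumCoords S x = 1} = {x ∈ rootPolytope n | sumCoords S' x = 1}) :
    S = S' :=
  Finset.eq_of_forall_mem_and_notMem_iff hS hS' fun _ _ hab => by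
    rw [← single_sub_single_mem_sep_rootPolytope_iff hab, h,
      single_sub_single_mem_sep_rootPolytope_iff hab]

end RootPolytope

theorem specht_stmt_15_general (n : ℕ) (S : Finset (Fin (n + 1)))
    (hS : S.Nonempty) (hS' : S ≠ Finset.univ) :
    IsGreatest ((fun x => ∑ i ∈ S, x i) '' rootPolytope n) 1 ∧
    {x ∈ rootPolytope n | ∑ i ∈ S, x i = 1}
      = convexHull ℝ {x | ∃ i ∈ S, ∃ j ∉ S, x = Pi.single i 1 - Pi.single j 1} ∧
    IsExposed ℝ (rootPolytope n) {x ∈ rootPolytope n | ∑ i ∈ S, x i = 1} ∧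
    Module.finrank ℝ
      (affineSpan ℝ {x ∈ rootPolytope n | ∑ i ∈ S, x i = 1}).direction = n - 1 ∧
    ∀ S' : Finset (Fin (n + 1)), S'.Nonempty → S' ≠ Finset.univ →
      {x ∈ rootPolytope n | ∑ i ∈ S', x i = 1} = {x ∈ rootPolytope n | ∑ i ∈ S, x i = 1} →
      S' = S := by
  have hmax := isGreatest_sumCoords_image_rootPolytope hS hS'
  have hface : {x ∈ rootPolytope n | ∑ i ∈ S, x i = 1} = convexHull ℝ (crossingRoots S) :=
    sep_rootPolytope_sumCoords_eq_one S
  refine ⟨hmax, hface, ?_, ?_, fun S' _ hS'' h =>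
    eq_of_sep_rootPolytope_sumCoords_eq_one hS'' hS' h⟩
  · exact isExposed_sep_eq_of_isGreatest (l := (sumCoords S).toContinuousLinearMap) hmax
  · rw [hface, affineSpan_convexHull, direction_affineSpan,
      finrank_vectorSpan_crossingRoots hS hS', Fintype.card_fin]
    rfl

/-- For a nonempty proper subset `S` of `{0,…,n}` with complement `T`,
the maximum of `x ↦ Σ_{i∈S} x_i` over `P_{A_n}` is `1`; the set of maximizers
`F_S = {x ∈ P_{A_n} : Σ_{i∈S} x_i = 1}` is an exposed face equal to the convex hull
of `{e_i − e_j : i ∈ S, j ∈ T}`; it has affine dimension `n − 1` (a facet); and the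
faces `F_S` for distinct nonempty proper `S` are pairwise distinct. -/
theorem specht_stmt_15 (n : ℕ) (hn : 1 ≤ n) (S : Finset (Fin (n + 1)))
    (hS : S.Nonempty) (hS' : S ≠ Finset.univ) :
    IsGreatest ((fun x => ∑ i ∈ S, x i) '' rootPolytope n) 1 ∧
    {x ∈ rootPolytope n | ∑ i ∈ S, x i = 1}
      = convexHull ℝ {x | ∃ i ∈ S, ∃ j ∉ S, x = Pi.single i 1 - Pi.single j 1} ∧
    IsExposed ℝ (rootPolytope n) {x ∈ rootPolytope n | ∑ i ∈ S, x i = 1} ∧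
    Module.finrank ℝ
      (affineSpan ℝ {x ∈ rootPolytope n | ∑ i ∈ S, x i = 1}).direction = n - 1 ∧
    ∀ S' : Finset (Fin (n + 1)), S'.Nonempty → S' ≠ Finset.univ →
      {x ∈ rootPolytope n | ∑ i ∈ S', x i = 1} = {x ∈ rootPolytope n | ∑ i ∈ S, x i = 1} →
      S' = S :=
  specht_stmt_15_general n S hS hS'
end

section
/- For n ≥ 1, if x ∈ P_{A_n} has all coordinates integers, then either x = 0 or x = e_i − e_j for some distinct i, j ∈ {0, 1, …, n}; i.e., the only lattice points of the root polytope P_{A_n} are its vertices and the origin. -/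
open Finset

@[simp, norm_cast]
lemma Int.cast_posPart {R : Type*} [Ring R] [LinearOrder R] [IsStrictOrderedRing R] (a : ℤ) :
    ((a⁺ : ℤ) : R) = (a : R)⁺ := by
  simp [posPart_def]

section
variable {ι : Type*} [Fintype ι]

lemma convexOn_sum_posPart : ConvexOn ℝ Set.univ fun y : ι → ℝ => ∑ i, (y i)⁺ := by
  have hcoord (i : ι) : ConvexOn ℝ Set.univ fun y : ι → ℝ => (y i)⁺ :=
    ((LinearMap.proj i : (ι → ℝ) →ₗ[ℝ] ℝ).convexOn convex_univ).sup
      (convexOn_const 0 convex_univ)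
  simpa only [sum_fn] using
    sum_induction (s := univ) (fun i (y : ι → ℝ) => (y i)⁺) (ConvexOn ℝ Set.univ)
      (fun _ _ => ConvexOn.add) (convexOn_const 0 convex_univ) fun i _ => hcoord i

lemma convex_setOf_sum_eq_zero_and_sum_posPart_le (r : ℝ) :
    Convex ℝ {y : ι → ℝ | ∑ i, y i = 0 ∧ ∑ i, (y i)⁺ ≤ r} := by
  have hlin : IsLinearMap ℝ fun y : ι → ℝ => ∑ i, y i :=
    ⟨fun y z => sum_add_distrib, fun c y => (mul_sum ..).symm⟩
  simpa only [Set.mem_univ, true_and, Set.ofPred_and] using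
    (convex_hyperplane hlin 0).inter (convexOn_sum_posPart.convex_le r)

lemma sum_posPart_single_sub_single_le_one [DecidableEq ι] (i j : ι) :
    ∑ m, ((Pi.single i 1 - Pi.single j 1 : ι → ℝ) m)⁺ ≤ 1 :=
  have hnonneg (i : ι) : 0 ≤ (Pi.single i 1 : ι → ℝ) := Pi.single_nonneg.2 zero_le_one
  calc ∑ m, ((Pi.single i 1 - Pi.single j 1 : ι → ℝ) m)⁺
      ≤ ∑ m, (Pi.single i 1 : ι → ℝ) m :=
        sum_le_sum fun m _ => max_le (sub_le_self _ (hnonneg j m)) (hnonneg i m)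
    _ = 1 := by simp

lemma exists_eq_single_of_nonneg_of_sum_eq_one [DecidableEq ι] {f : ι → ℤ} (hf : 0 ≤ f)
    (hsum : ∑ i, f i = 1) : ∃ i, f = Pi.single i 1 := by
  obtain ⟨i, hi⟩ : ∃ i, f i ≠ 0 := by
    by_contra! h
    simp [h] at hsum
  have hfi : f i = 1 :=
    le_antisymm (hsum ▸ single_le_sum (fun m _ => hf m) (mem_univ i))
      (by have : 0 ≤ f i := hf i; omega)
  have hrest : ∑ m ∈ univ.erase i, f m = 0 := by
    rw [← add_sum_erase _ _ (mem_univ i), hfi] at hsum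
    omega
  refine ⟨i, funext fun m => ?_⟩
  rcases eq_or_ne m i with rfl | hmi
  · simp [hfi]
  · rw [Pi.single_eq_of_ne hmi]
    exact (sum_eq_zero_iff_of_nonneg fun m _ => hf m).1 hrest m
      (mem_erase.2 ⟨hmi, mem_univ m⟩)

lemma eq_zero_or_eq_single_sub_single [DecidableEq ι] {k : ι → ℤ} (hsum : ∑ i, k i = 0)
    (hpos : ∑ i, (k i)⁺ ≤ 1) :
    k = 0 ∨ ∃ i j, i ≠ j ∧ k = Pi.single i 1 - Pi.single j 1 := by
  change ∑ i, k⁺ i ≤ 1 at hpos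
  have hneg : ∑ i, k⁻ i = ∑ i, k⁺ i := by
    have := congr_arg (fun f : ι → ℤ => ∑ i, f i) (posPart_sub_negPart k)
    simp only [Pi.sub_apply, sum_sub_distrib] at this
    omega
  have hpos_nonneg : 0 ≤ ∑ i, k⁺ i := Fintype.sum_nonneg (posPart_nonneg k)
  obtain h0 | h1 : ∑ i, k⁺ i = 0 ∨ ∑ i, k⁺ i = 1 := by omega
  · left
    rw [← posPart_sub_negPart k, (Fintype.sum_eq_zero_iff_of_nonneg (posPart_nonneg k)).1 h0,
      (Fintype.sum_eq_zero_iff_of_nonneg (negPart_nonneg k)).1 (hneg.trans h0), sub_zero]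
  · right
    obtain ⟨i, hi⟩ := exists_eq_single_of_nonneg_of_sum_eq_one (posPart_nonneg k) h1
    obtain ⟨j, hj⟩ := exists_eq_single_of_nonneg_of_sum_eq_one (negPart_nonneg k) (hneg.trans h1)
    refine ⟨i, j, ?_, by rw [← posPart_sub_negPart k, hi, hj]⟩
    rintro rfl
    have := congr_fun (posPart_inf_negPart_eq_zero k) i
    simp [hi, hj] at this

end

lemma rootPolytope_subset (n : ℕ) :
    rootPolytope n ⊆ {y | ∑ i, y i = 0 ∧ ∑ i, (y i)⁺ ≤ 1} :=
  convexHull_min (by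
    rintro _ ⟨i, j, -, rfl⟩
    exact ⟨by simp, sum_posPart_single_sub_single_le_one i j⟩)
    (convex_setOf_sum_eq_zero_and_sum_posPart_le 1)

theorem specht_stmt_16_general (n : ℕ) (x : Fin (n + 1) → ℝ)
    (hx : x ∈ rootPolytope n) (hint : ∀ i, ∃ k : ℤ, x i = (k : ℝ)) :
    x = 0 ∨ ∃ i j : Fin (n + 1), i ≠ j ∧ x = Pi.single i 1 - Pi.single j 1 := by
  obtain ⟨hsum, hpos⟩ := rootPolytope_subset n hx
  choose k hk using hint
  simp only [hk] at hsum hpos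
  rcases eq_zero_or_eq_single_sub_single (k := k) (by exact_mod_cast hsum)
    (by exact_mod_cast hpos) with rfl | ⟨i, j, hij, rfl⟩
  · exact Or.inl (funext fun m => by simp [hk])
  · refine Or.inr ⟨i, j, hij, funext fun m => ?_⟩
    simp [hk, Pi.single_apply]

/-- The only lattice points of the root polytope `P_{A_n}` are its
vertices `e_i − e_j` and the origin. -/
theorem specht_stmt_16 (n : ℕ) (hn : 1 ≤ n) (x : Fin (n + 1) → ℝ)
    (hx : x ∈ rootPolytope n) (hint : ∀ i, ∃ k : ℤ, x i = (k : ℝ)) :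
    x = 0 ∨ ∃ i j : Fin (n + 1), i ≠ j ∧ x = Pi.single i 1 - Pi.single j 1 :=
  specht_stmt_16_general n x hx hint
end
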